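/- Let m ≥ 2 and define z_n^(m) by z_0=0, z_1=1, z_2=020 (for m=2, z_2=00), z_n = (n−3 mod m)^{-1} h_{n-3}^R h_{n-2}^R h_{n-m}^R h_{n-m+1}^R ⋯ h_{n-3}^R (n−2 mod m) for n ≥ m (and an analogous formula for 3 ≤ n ≤ m−1). Then for all n ≥ m+1, |z_n| = |z_{n-1}| + |z_{n-2}| + ⋯ + |z_{n-m}|. -/

import Mathlib

/-- The `m`-bonacci morphism on letters: `i ↦ 0(i+1)` for `i ≤ m-2`, `(m-1) ↦ 0`. -/
def phi (m a : ℕ) : List ℕ := if a = m - 1 then [0] else [0, a + 1]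

/-- The `m`-bonacci morphism on words. -/
def phiW (m : ℕ) (w : List ℕ) : List ℕ := w.flatMap (phi m)

/-- The finite `m`-bonacci words `h_n = φ_m^n(0)`. -/
def hb (m : ℕ) : ℕ → List ℕ
  | 0 => [0]
  | n+1 => phiW m (hb m n)

/-- The palindromic prefixes of the `m`-bonacci word, shifted:
`ub m n` is the paper's `u_{n+1}` (so `ub m 0 = u₁ = ε`, and `u_{n+2} = h_n u_{n+1}`). -/
def ub (m : ℕ) : ℕ → List ℕ
  | 0 => []
  | n+1 => hb m n ++ ub m n

/-- Number of occurrences of `x` as a factor of `w` (counted by starting position). -/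
def occ (x w : List ℕ) : ℕ :=
  ((List.range (w.length + 1)).filter (fun i => x.isPrefixOf (w.drop i))).length

/-- A word is closed if it is a single letter or has a border (a proper factor that
is both a prefix and a suffix) occurring exactly twice in it. -/
def ClosedWord (w : List ℕ) : Prop :=
  w.length = 1 ∨
    ∃ x : List ℕ, x ≠ [] ∧ x.length < w.length ∧ x <+: w ∧ x <:+ w ∧ occ x w = 2

/-- The words `z_n` of the closed `z`-factorization of the `m`-bonacci word:
`z₀ = 0`, `z₁ = 1`, `z₂ = 020` (`00` when `m = 2`),
`z_n = (n-3 mod m)⁻¹ h_{n-3}^R h_{n-2}^R (n) h₀^R ⋯ h_{n-3}^R (n-2)` for `3 ≤ n ≤ m-1`, and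
`z_n = (n-3 mod m)⁻¹ h_{n-3}^R h_{n-2}^R h_{n-m}^R h_{n-m+1}^R ⋯ h_{n-3}^R (n-2 mod m)` for `n ≥ m`
(removing the first letter of `h_{n-3}^R`, which is `n-3 mod m` when `m ∤ n-3` and `0` otherwise). -/
def zb (m : ℕ) : ℕ → List ℕ
  | 0 => [0]
  | 1 => [1]
  | 2 => if m = 2 then [0, 0] else [0, 2, 0]
  | n+3 =>
    if m ≤ n + 3 then
      ((hb m n).reverse).tail ++ (hb m (n + 1)).reverse ++
        (((List.range (m - 2)).map (fun j => (hb m (n + 3 - m + j)).reverse)).flatten) ++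
        [(n + 1) % m]
    else
      ((hb m n).reverse).tail ++ (hb m (n + 1)).reverse ++ [n + 3] ++
        (((List.range (n + 1)).map (fun j => (hb m j).reverse)).flatten) ++ [n + 1]

/-!
`φ_m` doubles the length of a word except at its letters `m - 1`, and the letters `m - 1` of
`h_k` descend from the letters `0` of `h_{k-m+1}`, one for each letter of `h_{k-m}`. Hence
`|h_{k+1}| = 2 |h_k| - |h_{k-m}|`, so the lengths `|h_k|`, preceded by `0, …, 0, 1`, solve the
`m`-bonacci recurrence on all of `ℕ`. Up to a few single letters, accounted for by that leading
`1`, the word `z_n` is a concatenation of reversed words `h_i`; so for every `n ≥ 1`, the short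
words `z_n` with `n < m` included, `|z_n|` is a sum of shifts of this solution, hence a solution.
-/

open Finset

namespace LinearRecurrence

variable {R : Type*} [CommSemiring R] {E : LinearRecurrence R}

theorem IsSolution.shift {u : ℕ → R} (hu : E.IsSolution u) (c : ℕ) :
    E.IsSolution fun n => u (n + c) := by
  intro n
  simpa only [add_right_comm] using hu (n + c)

end LinearRecurrence

theorem List.sum_map_range {M : Type*} [AddCommMonoid M] (f : ℕ → M) (n : ℕ) :
    ((List.range n).map f).sum = ∑ j ∈ Finset.range n, f j := by
  rw [← Finset.sum_map_val]
  rfl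

def bonacci (m : ℕ) : LinearRecurrence ℕ := ⟨m, fun _ => 1⟩

theorem bonacci_isSolution_iff {m : ℕ} {u : ℕ → ℕ} :
    (bonacci m).IsSolution u ↔ ∀ n, u (n + m) = ∑ i ∈ range m, u (n + i) := by
  show (∀ n, u (n + m) = ∑ i : Fin m, 1 * u (n + i)) ↔ _
  simp only [one_mul]
  exact forall_congr' fun n => by rw [Fin.sum_univ_eq_sum_range (fun i => u (n + i))]

theorem bonacci_isSolution_of_doubling {m : ℕ} {u : ℕ → ℕ}
    (hdouble : ∀ n, u (n + m + 1) + u n = 2 * u (n + m))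
    (hbase : u m = ∑ i ∈ range m, u i) : (bonacci m).IsSolution u := by
  rw [bonacci_isSolution_iff]
  intro n
  induction n with
  | zero => simpa using hbase
  | succ n ih =>
    have hslide : ∑ i ∈ range m, u (n + 1 + i) + u n = ∑ i ∈ range m, u (n + i) + u (n + m) := by
      rw [← sum_range_succ (fun i => u (n + i)), sum_range_succ']
      exact congrArg (· + u n) (sum_congr rfl fun i _ => by rw [Nat.add_right_comm, Nat.add_assoc])
    have := hdouble n
    rw [Nat.add_right_comm n 1]
    omega

section MorphismCounts

variable (m : ℕ)

theorem length_phiW_add_count (w : List ℕ) :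
    (phiW m w).length + w.count (m - 1) = 2 * w.length := by
  induction w with
  | nil => rfl
  | cons a w ih =>
    simp only [phiW, List.flatMap_cons, List.length_append, List.count_cons, phi] at ih ⊢
    split_ifs <;> grind

theorem count_zero_phiW (w : List ℕ) : (phiW m w).count 0 = w.length := by
  induction w with
  | nil => rfl
  | cons a w ih =>
    simp only [phiW, List.flatMap_cons, List.count_append, phi] at ih ⊢
    split_ifs <;> grind

theorem count_succ_phiW {c : ℕ} (hc : c ≠ m - 1) (w : List ℕ) :
    (phiW m w).count (c + 1) = w.count c := by
  induction w with
  | nil => rfl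
  | cons a w ih =>
    simp only [phiW, List.flatMap_cons, List.count_append, List.count_cons, phi] at ih ⊢
    split_ifs <;> grind

theorem le_of_mem_hb {k a : ℕ} (ha : a ∈ hb m k) : a ≤ k := by
  induction k generalizing a with
  | zero => simp_all [hb]
  | succ k ih =>
    obtain ⟨b, hbk, hab⟩ := List.mem_flatMap.mp ha
    have := ih hbk
    simp only [phi] at hab
    split_ifs at hab <;> grind

theorem length_hb_pos (k : ℕ) : 0 < (hb m k).length := by
  induction k with
  | zero => simp [hb]
  | succ k ih =>
    have := length_phiW_add_count m (hb m k)
    have := List.count_le_length (a := m - 1) (l := hb m k)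
    change 0 < (phiW m (hb m k)).length
    omega

theorem count_zero_hb (k : ℕ) : (hb m k).count 0 = (hb m (k - 1)).length := by
  cases k with
  | zero => rfl
  | succ k => exact count_zero_phiW m (hb m k)

theorem count_hb_add {j : ℕ} (hj : j < m) (k : ℕ) :
    (hb m (k + j)).count j = (hb m k).count 0 := by
  induction j with
  | zero => rfl
  | succ j ih => rw [← ih (by omega)]; exact count_succ_phiW m (by omega) _

end MorphismCounts

/-- The lengths `|h_i|` preceded by the `m - 1` zeros and the `1` that start the `m`-bonacci
recurrence; at `k = m - 1` the truncated subtraction `k - m = 0` supplies that `1 = |h_0|`. -/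
def padLen (m k : ℕ) : ℕ := if m - 1 ≤ k then (hb m (k - m)).length else 0

theorem padLen_of_lt {m k : ℕ} (hk : k < m - 1) : padLen m k = 0 := if_neg (by omega)

theorem padLen_add (m k : ℕ) : padLen m (k + m) = (hb m k).length := by
  rw [padLen, if_pos (by omega), Nat.add_sub_cancel]

theorem padLen_pred_self (m : ℕ) : padLen m (m - 1) = 1 := by
  simp [padLen, hb]

theorem count_pred_hb {m : ℕ} (hm : 1 ≤ m) (k : ℕ) : (hb m k).count (m - 1) = padLen m k := by
  unfold padLen
  split_ifs with hk
  · obtain ⟨i, rfl⟩ := Nat.exists_eq_add_of_le' hk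
    rw [count_hb_add m (by omega), count_zero_hb]
    congr 2
    omega
  · exact List.count_eq_zero.mpr fun h => hk (le_of_mem_hb m h)

theorem length_hb_succ_add_padLen {m : ℕ} (hm : 1 ≤ m) (k : ℕ) :
    (hb m (k + 1)).length + padLen m k = 2 * (hb m k).length := by
  rw [← count_pred_hb hm]
  exact length_phiW_add_count m (hb m k)

theorem sum_range_padLen_of_le {m c : ℕ} (hc : c ≤ m - 1) : ∑ k ∈ range c, padLen m k = 0 :=
  sum_eq_zero fun k hk => padLen_of_lt (by simp at hk; omega)

theorem sum_range_padLen {m : ℕ} (hm : 1 ≤ m) : ∑ k ∈ range m, padLen m k = 1 := by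
  obtain ⟨p, rfl⟩ := Nat.exists_eq_add_of_le' hm
  have := padLen_pred_self (p + 1)
  rw [Nat.add_sub_cancel] at this
  rw [sum_range_succ, sum_range_padLen_of_le (by omega), this]

theorem sum_range_padLen_add {m : ℕ} (hm : 1 ≤ m) (t : ℕ) :
    ∑ k ∈ range (m + t), padLen m k = 1 + ∑ i ∈ range t, (hb m i).length := by
  rw [sum_range_add, sum_range_padLen hm]
  simp only [add_comm m, padLen_add]

theorem bonacci_isSolution_padLen {m : ℕ} (hm : 1 ≤ m) : (bonacci m).IsSolution (padLen m) := by
  refine bonacci_isSolution_of_doubling (fun n => ?_) ?_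
  · rw [padLen_add, add_right_comm, padLen_add]
    exact length_hb_succ_add_padLen hm n
  · rw [sum_range_padLen hm]
    simpa [hb] using padLen_add m 0

theorem sum_range_padLen_shift {m c : ℕ} (hc : 2 ≤ c) (hcm : c ≤ m - 1) :
    ∑ j ∈ range (m - 2), padLen m (c + j) = 1 + ∑ i ∈ range (c - 2), (hb m i).length := by
  have hsplit := sum_range_add (padLen m) c (m - 2)
  rw [sum_range_padLen_of_le hcm, show c + (m - 2) = m + (c - 2) by omega,
    sum_range_padLen_add (by omega)] at hsplit
  omega

theorem length_zb_of_le {m t : ℕ} (h : m ≤ t + 3) :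
    (zb m (t + 3)).length = (hb m t).length + (hb m (t + 1)).length +
      ∑ j ∈ range (m - 2), (hb m (t + 3 - m + j)).length := by
  have := length_hb_pos m t
  rw [zb, if_pos h]
  simp only [List.tail_reverse, List.length_append, List.length_reverse, List.length_dropLast,
    List.length_flatten, List.map_map, Function.comp_def, List.sum_map_range, List.length_singleton]
  omega

theorem length_zb_of_lt {m t : ℕ} (h : t + 3 < m) :
    (zb m (t + 3)).length = (hb m t).length + (hb m (t + 1)).length + 1 +
      ∑ j ∈ range (t + 1), (hb m j).length := by
  have := length_hb_pos m t
  rw [zb, if_neg (by omega)]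
  simp only [List.tail_reverse, List.length_append, List.length_reverse, List.length_dropLast,
    List.length_flatten, List.map_map, Function.comp_def, List.sum_map_range, List.length_singleton]
  omega

theorem length_zb_succ {m : ℕ} (hm : 2 ≤ m) (s : ℕ) :
    (zb m (s + 1)).length = padLen m (s + (m - 2)) + padLen m (s + (m - 1)) +
      ∑ j ∈ range (m - 2), padLen m (s + (j + 1)) := by
  rcases s with _ | _ | t
  · have hsum : ∑ j ∈ range (m - 2), padLen m (0 + (j + 1)) = 0 :=
      sum_eq_zero fun j hj => padLen_of_lt (by simp at hj; omega)
    rw [hsum, padLen_of_lt (k := 0 + (m - 2)) (by omega)]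
    simp only [Nat.zero_add, add_zero, padLen_pred_self]
    rfl
  · rw [show 0 + 1 + (m - 2) = m - 1 by omega, show 0 + 1 + (m - 1) = 0 + m by omega,
      padLen_pred_self, padLen_add]
    rcases hm.eq_or_lt with rfl | hm3
    · rfl
    · have hsum : ∑ j ∈ range (m - 2), padLen m (0 + 1 + (j + 1)) = 1 := by
        have h2 := sum_range_padLen_shift (m := m) (c := 2) le_rfl (by omega)
        rw [Nat.sub_self, sum_range_zero, add_zero] at h2
        rw [← h2]
        exact sum_congr rfl fun j _ => by congr 1; omega
      simp [zb, hm3.ne', hb, hsum]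
  · change (zb m (t + 3)).length = _
    rw [show t + 1 + 1 + (m - 2) = t + m by omega, show t + 1 + 1 + (m - 1) = t + 1 + m by omega,
      padLen_add, padLen_add]
    by_cases h : m ≤ t + 3
    · rw [length_zb_of_le h]
      congr 1
      exact sum_congr rfl fun j _ => by
        rw [show t + 1 + 1 + (j + 1) = t + 3 - m + j + m by omega, padLen_add]
    · rw [length_zb_of_lt (not_le.mp h)]
      have hsum := sum_range_padLen_shift (m := m) (c := t + 3) (by omega) (by omega)
      simp only [show ∀ j, t + 1 + 1 + (j + 1) = t + 3 + j by omega] at hsum ⊢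
      rw [hsum, show t + 3 - 2 = t + 1 by omega]
      omega

theorem bonacci_isSolution_length_zb {m : ℕ} (hm : 2 ≤ m) :
    (bonacci m).IsSolution fun s => (zb m (s + 1)).length := by
  have hshift : ∀ c, (fun s => padLen m (s + c)) ∈ (bonacci m).solSpace := fun c =>
    (LinearRecurrence.is_sol_iff_mem_solSpace _ _).mp
      ((bonacci_isSolution_padLen (by omega)).shift c)
  have hsplit : (fun s => (zb m (s + 1)).length) = (fun s => padLen m (s + (m - 2))) +
      (fun s => padLen m (s + (m - 1))) + ∑ j ∈ range (m - 2), fun s => padLen m (s + (j + 1)) := by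
    ext s
    simp [length_zb_succ hm, Finset.sum_apply]
  rw [LinearRecurrence.is_sol_iff_mem_solSpace, hsplit]
  exact add_mem (add_mem (hshift _) (hshift _)) (sum_mem fun j _ => hshift _)

/-- for `m ≥ 2` and `n ≥ m + 1`,
`|z_n| = |z_{n-1}| + |z_{n-2}| + ⋯ + |z_{n-m}|`. -/
theorem zb_length_recursion :
    ∀ m : ℕ, 2 ≤ m → ∀ n : ℕ, m + 1 ≤ n →
      (zb m n).length = ∑ j ∈ Finset.range m, (zb m (n - 1 - j)).length := by
  intro m hm n hn
  obtain ⟨s, rfl⟩ := Nat.exists_eq_add_of_le' hn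
  calc (zb m (s + (m + 1))).length = ∑ i ∈ range m, (zb m (s + i + 1)).length :=
        bonacci_isSolution_iff.mp (bonacci_isSolution_length_zb hm) s
    _ = ∑ j ∈ range m, (zb m (s + (m - 1 - j) + 1)).length :=
        (sum_range_reflect (fun i => (zb m (s + i + 1)).length) m).symm
    _ = ∑ j ∈ range m, (zb m (s + (m + 1) - 1 - j)).length :=
        sum_congr rfl fun j hj => by rw [show s + (m - 1 - j) + 1 = s + (m + 1) - 1 - j by
          simp only [mem_range] at hj; omega]
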